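/- arXiv:2409.06294 — 3 statements merged into one kernel-verified Lean document; each statement's English description precedes it below -/
import Mathlib

section
/- If g ∈ GL(E) is diagonalizable over 𝔽 with a one-dimensional eigenspace L⁺ of eigenvalue μ⁺ of strictly greatest modulus and a g-invariant complementary hyperplane on which the eigenvalue of smallest modulus μ⁻ also has a one-dimensional eigenspace, then the period of g with respect to the projective cross-ratio, p(g) := b^E(g⁺, g⁻, X, g·X) for any suitable line X ⊂ E*, equals μ⁺/μ⁻, where g⁺ and g⁻ are the attracting and repelling fixed lines. -/
/-- If `g ∈ GL(E)` has a one-dimensional attracting eigenline `g⁺ = ⟨v⁺⟩` with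
eigenvalue `μ⁺` of strictly greatest modulus and a repelling eigenline
`g⁻ = ⟨v⁻⟩` with eigenvalue `μ⁻` of smallest modulus, then the period of `g`
with respect to the projective cross-ratio,
`p(g) := b^E(g⁺, g⁻, X, g·X)` for any line `X ⊆ E*` transverse to both
eigenlines (where `g` acts on `E*` by the contragredient action `φ ↦ φ ∘ g⁻¹`),
equals `μ⁺/μ⁻`. -/
theorem period_eq_eigenvalue_ratio
    {𝔽 : Type*} [NormedField 𝔽] {E : Type*} [AddCommGroup E] [Module 𝔽 E]
    [FiniteDimensional 𝔽 E]
    (g : E ≃ₗ[𝔽] E) (vp vm : E) (μp μm : 𝔽)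
    (hvp : vp ≠ 0) (hvm : vm ≠ 0)
    (hgp : g vp = μp • vp) (hgm : g vm = μm • vm)
    (hmod : ‖μm‖ < ‖μp‖)
    (X : Module.Dual 𝔽 E) (hXp : X vp ≠ 0) (hXm : X vm ≠ 0) :
    (X vp * (X.comp (g.symm : E →ₗ[𝔽] E)) vm) /
      (X vm * (X.comp (g.symm : E →ₗ[𝔽] E)) vp) = μp / μm := by
  have hμp : μp ≠ 0 := by
    intro h; apply hvp
    have := g.injective.eq_iff (a := vp) (b := 0)
    simpa [hgp, h] using this.mp (by simp [hgp, h])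
  have hμm : μm ≠ 0 := by
    intro h; apply hvm
    have := g.injective.eq_iff (a := vm) (b := 0)
    simpa [hgm, h] using this.mp (by simp [hgm, h])
  have hsp : g.symm vp = μp⁻¹ • vp := by
    apply g.injective; rw [g.apply_symm_apply, map_smul, hgp, smul_smul,
      inv_mul_cancel₀ hμp, one_smul]
  have hsm : g.symm vm = μm⁻¹ • vm := by
    apply g.injective; rw [g.apply_symm_apply, map_smul, hgm, smul_smul,
      inv_mul_cancel₀ hμm, one_smul]
  simp only [LinearMap.comp_apply, LinearEquiv.coe_coe, hsp, hsm, map_smul,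
    smul_eq_mul]
  field_simp
end

section
/- Let A and B be elements of PSL₂(ℝ) that are hyperbolic (loxodromic), with attracting/repelling fixed points (a⁺, a⁻) and (b⁺, b⁻) in P¹(ℝ). If the sextuple (a⁺, b⁻, a⁻, b⁺, B(a⁺), A(b⁺)) is cyclically ordered on P¹(ℝ), then 1/p(B) + 1/p(A) < 1, where p(g) denotes the period of g with respect to the projective cross-ratio, i.e., p(g) = λ⁺(g)/λ⁻(g) the ratio of the eigenvalues of a lift of g of larger and smaller absolute value. -/
/-!
Normalise `b⁺ = ∞`, `b⁻ = 0`, so that `B x = β² x`. The cyclic order forces `a⁺ = -t < 0 < a⁻ = s`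
and `-β² t < A(∞) < -t`; solving for `A(∞)` from the multiplier `α²` of `A` turns the inequality
`-β² t < A(∞)` into `s < t (α²β² - α² - β²)`, so `α²β² - α² - β² > 0`. Invariantly, one expands
`B a⁺` and `A b⁺` in the eigenbases of `B` and `A` and uses the `SL₂`-invariance of `det2`.
-/
/-- Determinant of two vectors of ℝ², viewed as homogeneous coordinates on `P¹(ℝ)`. -/
def det2 (v w : Fin 2 → ℝ) : ℝ :=
  v 0 * w 1 - v 1 * w 0

/-- `(a, b, c)` appear in this (positive) cyclic order on `P¹(ℝ)`. -/
def CyclicPos3 (a b c : Fin 2 → ℝ) : Prop :=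
  0 < det2 a b * det2 b c * det2 c a

open Matrix

section Det2

variable (u v w : Fin 2 → ℝ) (c : ℝ)

theorem det2_swap : det2 v u = -det2 u v := by
  simp only [det2]; ring

theorem det2_smul_left : det2 (c • u) v = c * det2 u v := by
  simp only [det2, Pi.smul_apply, smul_eq_mul]; ring

theorem det2_smul_right : det2 u (c • v) = c * det2 u v := by
  simp only [det2, Pi.smul_apply, smul_eq_mul]; ring

theorem det2_add_left : det2 (u + v) w = det2 u w + det2 v w := by
  simp only [det2, Pi.add_apply]; ring

theorem det2_add_right : det2 u (v + w) = det2 u v + det2 u w := by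
  simp only [det2, Pi.add_apply]; ring

/-- Cramer's rule. -/
theorem det2_smul_eq_add : det2 u v • w = det2 w v • u + det2 u w • v := by
  funext i
  fin_cases i <;> simp [det2] <;> ring

theorem det2_mulVec_mulVec (M : Matrix (Fin 2) (Fin 2) ℝ) :
    det2 (M *ᵥ u) (M *ᵥ v) = M.det * det2 u v := by
  simp only [det2, Matrix.mulVec, dotProduct, Fin.sum_univ_two, Matrix.det_fin_two]
  ring

end Det2

section Eigenbasis

variable {M : Matrix (Fin 2) (Fin 2) ℝ} {u v : Fin 2 → ℝ} {μ ν : ℝ}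

theorem det2_smul_mulVec_of_eigen (hu : M *ᵥ u = μ • u) (hv : M *ᵥ v = ν • v)
    (w : Fin 2 → ℝ) :
    det2 u v • (M *ᵥ w) = (μ * det2 w v) • u + (ν * det2 u w) • v := by
  rw [← Matrix.mulVec_smul, det2_smul_eq_add u v w, Matrix.mulVec_add, Matrix.mulVec_smul,
    Matrix.mulVec_smul, hu, hv, smul_smul, smul_smul, mul_comm μ, mul_comm ν]

theorem det2_mul_det2_mulVec_self (hu : M *ᵥ u = μ • u) (hv : M *ᵥ v = ν • v)
    (x : Fin 2 → ℝ) :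
    det2 u v * det2 x (M *ᵥ x) = (μ - ν) * det2 x u * det2 x v := by
  rw [← det2_smul_right, det2_smul_mulVec_of_eigen hu hv, det2_add_right, det2_smul_right,
    det2_smul_right, det2_swap x u]
  ring

theorem mul_det2_mulVec_of_eigen (hu : M *ᵥ u = μ • u) (w : Fin 2 → ℝ) :
    μ * det2 (M *ᵥ w) u = M.det * det2 w u := by
  rw [← det2_smul_right, ← hu, det2_mulVec_mulVec]

end Eigenbasis

theorem mul_det2_mulVec_mulVec_of_eigen {A B : Matrix (Fin 2) (Fin 2) ℝ} {p q r s : Fin 2 → ℝ}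
    {α β : ℝ} (hα : α ≠ 0) (hβ : β ≠ 0)
    (hAp : A *ᵥ p = α • p) (hAm : A *ᵥ q = α⁻¹ • q)
    (hBp : B *ᵥ r = β • r) (hBm : B *ᵥ s = β⁻¹ • s) :
    α * β * (det2 r s * det2 p q * det2 (B *ᵥ p) (A *ᵥ r)) =
      det2 p r * (det2 p s * det2 q r * (α ^ 2 * β ^ 2 - α ^ 2 - β ^ 2)
        - det2 p r * det2 s q) := by
  rw [mul_assoc (det2 r s), ← det2_smul_right, ← det2_smul_left,
    det2_smul_mulVec_of_eigen hBp hBm, det2_smul_mulVec_of_eigen hAp hAm]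
  simp only [det2_add_left, det2_add_right, det2_smul_left, det2_smul_right]
  rw [det2_swap p r, det2_swap q r, det2_swap p s]
  field_simp
  ring

theorem one_div_add_one_div_lt_one {x y : ℝ} (hx : 0 < x) (hy : 0 < y) (h : x + y < x * y) :
    1 / y + 1 / x < 1 := by
  rw [div_add_div _ _ hy.ne' hx.ne', div_lt_one (by positivity)]
  linarith

theorem sq_add_sq_lt_sq_mul_sq_of_cyclicPos3 {A B : Matrix (Fin 2) (Fin 2) ℝ} (hA : A.det = 1)
    {p q r s : Fin 2 → ℝ} {α β : ℝ} (hα : α ≠ 0) (hβ : 1 < β ^ 2)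
    (hAp : A *ᵥ p = α • p) (hAm : A *ᵥ q = α⁻¹ • q)
    (hBp : B *ᵥ r = β • r) (hBm : B *ᵥ s = β⁻¹ • s)
    (hpsq : CyclicPos3 p s q) (hpqr : CyclicPos3 p q r) (hsqr : CyclicPos3 s q r)
    (hcyc : CyclicPos3 p (B *ᵥ p) (A *ᵥ r)) :
    α ^ 2 + β ^ 2 < α ^ 2 * β ^ 2 := by
  have hβ0 : β ≠ 0 := by rintro rfl; norm_num at hβ
  have hrs : det2 r s ≠ 0 := fun h => by simp [CyclicPos3, h] at hsqr
  have hpq : det2 p q ≠ 0 := fun h => by simp [CyclicPos3, h] at hpqr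
  have hpBp := det2_mul_det2_mulVec_self hBp hBm p
  have hArp := mul_det2_mulVec_of_eigen hAp r
  have hBpAr := mul_det2_mulVec_mulVec_of_eigen hα hβ0 hAp hAm hBp hBm
  have hpqr_sign : det2 p q * det2 p r * det2 q r < 0 := by
    unfold CyclicPos3 at hpqr; rw [det2_swap p r] at hpqr; linarith
  have hpsq_sign : det2 p q * det2 p s * det2 s q < 0 := by
    unfold CyclicPos3 at hpsq; rw [det2_swap p q] at hpsq; linarith
  -- The orientation of `(a⁺, B a⁺, A b⁺)`, up to a square factor; inside the bracket the order of
  -- `(a⁺, b⁻, a⁻)` makes the second summand nonpositive, and that of `(a⁺, a⁻, b⁺)` makes the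
  -- coefficient of `α²β² - α² - β²` nonnegative.
  have hkey : 0 < (β ^ 2 - 1) * det2 p r ^ 2 *
      (det2 p s ^ 2 * -(det2 p q * det2 p r * det2 q r) * (α ^ 2 * β ^ 2 - α ^ 2 - β ^ 2)
        + det2 p q * det2 p s * det2 s q * det2 p r ^ 2) := by
    calc 0 < (det2 r s * det2 p q * α * β) ^ 2 *
          (det2 p (B *ᵥ p) * det2 (B *ᵥ p) (A *ᵥ r) * det2 (A *ᵥ r) p) :=
          mul_pos (by positivity) hcyc
      _ = det2 r s * det2 p (B *ᵥ p) *
          (α * β * (det2 r s * det2 p q * det2 (B *ᵥ p) (A *ᵥ r))) *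
          (α * det2 (A *ᵥ r) p) * (β * det2 p q) := by ring
      _ = _ := by
          rw [hpBp, hBpAr, hArp, hA, one_mul, det2_swap p r]
          field_simp
          ring
  have hbracket := pos_of_mul_pos_right hkey (by positivity)
  have hsecond_nonpos : det2 p q * det2 p s * det2 s q * det2 p r ^ 2 ≤ 0 :=
    mul_nonpos_of_nonpos_of_nonneg hpsq_sign.le (sq_nonneg _)
  have hK := pos_of_mul_pos_right (by linarith : 0 < det2 p s ^ 2 *
    -(det2 p q * det2 p r * det2 q r) * (α ^ 2 * β ^ 2 - α ^ 2 - β ^ 2))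
    (mul_nonneg (sq_nonneg _) (neg_nonneg.mpr hpqr_sign.le))
  linarith

theorem collar_lemma_PSL2_general
    (A B : Matrix.SpecialLinearGroup (Fin 2) ℝ)
    (vap vam vbp vbm : Fin 2 → ℝ)
    (α β : ℝ) (hα : 1 < |α|) (hβ : 1 < |β|)
    (hAp : (A : Matrix (Fin 2) (Fin 2) ℝ).mulVec vap = α • vap)
    (hAm : (A : Matrix (Fin 2) (Fin 2) ℝ).mulVec vam = α⁻¹ • vam)
    (hBp : (B : Matrix (Fin 2) (Fin 2) ℝ).mulVec vbp = β • vbp)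
    (hBm : (B : Matrix (Fin 2) (Fin 2) ℝ).mulVec vbm = β⁻¹ • vbm)
    (hcyc : ∀ i j k : Fin 6, i < j → j < k →
      CyclicPos3
        (![vap, vbm, vam, vbp,
            (B : Matrix (Fin 2) (Fin 2) ℝ).mulVec vap,
            (A : Matrix (Fin 2) (Fin 2) ℝ).mulVec vbp] i)
        (![vap, vbm, vam, vbp,
            (B : Matrix (Fin 2) (Fin 2) ℝ).mulVec vap,
            (A : Matrix (Fin 2) (Fin 2) ℝ).mulVec vbp] j)
        (![vap, vbm, vam, vbp,
            (B : Matrix (Fin 2) (Fin 2) ℝ).mulVec vap,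
            (A : Matrix (Fin 2) (Fin 2) ℝ).mulVec vbp] k)) :
    1 / β ^ 2 + 1 / α ^ 2 < 1 := by
  have hα0 : α ≠ 0 := by rintro rfl; norm_num at hα
  have hβ0 : β ≠ 0 := by rintro rfl; norm_num at hβ
  have hβ2 : 1 < β ^ 2 := one_lt_sq_iff_one_lt_abs β |>.mpr hβ
  refine one_div_add_one_div_lt_one (by positivity) (by positivity) ?_
  exact sq_add_sq_lt_sq_mul_sq_of_cyclicPos3 A.det_coe hα0 hβ2 hAp hAm hBp hBm
    (hcyc 0 1 2 (by decide) (by decide)) (hcyc 0 2 3 (by decide) (by decide))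
    (hcyc 1 2 3 (by decide) (by decide)) (hcyc 0 4 5 (by decide) (by decide))

/-- **Collar lemma in `PSL₂(ℝ)`**. Let `A`, `B` be hyperbolic (loxodromic)
elements of `(P)SL₂(ℝ)`, given by lifts in `SL₂(ℝ)` with eigenvalues
`α, α⁻¹` resp. `β, β⁻¹`, `|α| > 1 < |β|`, acting on `P¹(ℝ)` by Möbius
transformations. The attracting/repelling fixed points `(a⁺, a⁻)` and
`(b⁺, b⁻)` are represented by the eigenvectors `va⁺, va⁻, vb⁺, vb⁻`.
If the sextuple `(a⁺, b⁻, a⁻, b⁺, B(a⁺), A(b⁺))` is cyclically ordered on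
`P¹(ℝ)` (every subtriple taken in this order is positively cyclically
ordered), then `1/p(B) + 1/p(A) < 1`, where the period is
`p(A) = α² = λ⁺(A)/λ⁻(A)`, the ratio of the eigenvalues of larger and smaller
absolute value. -/
theorem collar_lemma_PSL2
    (A B : Matrix.SpecialLinearGroup (Fin 2) ℝ)
    (vap vam vbp vbm : Fin 2 → ℝ)
    (hvap : vap ≠ 0) (hvam : vam ≠ 0) (hvbp : vbp ≠ 0) (hvbm : vbm ≠ 0)
    (α β : ℝ) (hα : 1 < |α|) (hβ : 1 < |β|)
    (hAp : (A : Matrix (Fin 2) (Fin 2) ℝ).mulVec vap = α • vap)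
    (hAm : (A : Matrix (Fin 2) (Fin 2) ℝ).mulVec vam = α⁻¹ • vam)
    (hBp : (B : Matrix (Fin 2) (Fin 2) ℝ).mulVec vbp = β • vbp)
    (hBm : (B : Matrix (Fin 2) (Fin 2) ℝ).mulVec vbm = β⁻¹ • vbm)
    (hcyc : ∀ i j k : Fin 6, i < j → j < k →
      CyclicPos3
        (![vap, vbm, vam, vbp,
            (B : Matrix (Fin 2) (Fin 2) ℝ).mulVec vap,
            (A : Matrix (Fin 2) (Fin 2) ℝ).mulVec vbp] i)
        (![vap, vbm, vam, vbp,
            (B : Matrix (Fin 2) (Fin 2) ℝ).mulVec vap,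
            (A : Matrix (Fin 2) (Fin 2) ℝ).mulVec vbp] j)
        (![vap, vbm, vam, vbp,
            (B : Matrix (Fin 2) (Fin 2) ℝ).mulVec vap,
            (A : Matrix (Fin 2) (Fin 2) ℝ).mulVec vbp] k)) :
    1 / β ^ 2 + 1 / α ^ 2 < 1 :=
  collar_lemma_PSL2_general A B vap vam vbp vbm α β hα hβ hAp hAm hBp hBm hcyc
end

section
/- Let 𝔤 be a Lie algebra, Σ⁺ a set of positive roots with simple roots Δ, θ ∈ Δ a simple root, and 𝔲_Θ = ⊕_{α ∈ Σ⁺_Θ} 𝔤_α with the subspace 𝔳_θ = 𝔤_θ^H ⊕ ⊕_{β ∈ Σ⁺_Θ \ {θ}} 𝔤_β, where 𝔤_θ^H is a hyperplane in 𝔤_θ not containing x_θ. Then 𝔳_θ is an ideal of the nilpotent Lie algebra 𝔲_Θ, and consequently 𝔲_Θ ≅ 𝔤_θ/𝔤_θ^H ⋉ 𝔳_θ as a semidirect decomposition. -/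
/-- Let `𝔤` be a Lie algebra with a root-space decomposition
(`⁅𝔤_α, 𝔤_β⁆ ⊆ 𝔤_{α+β}`), let `S = Σ⁺_Θ` be a set of (positive) roots closed
under addition (sums of two elements of `S` are again in `S` or have zero root
space), such that no sum of two elements of `S` equals the simple root `θ ∈ S`
and `⁅𝔤_θ, 𝔤_θ⁆ = 0`.  Let `H = 𝔤_θ^H` be a hyperplane of `𝔤_θ` not containing
`x_θ` (so that `𝔤_θ = H ⊕ ⟨x_θ⟩`), and set
`𝔲_Θ = ⨆_{α ∈ S} 𝔤_α` and `𝔳_θ = H ⊔ ⨆_{β ∈ S \ {θ}} 𝔤_β`.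
Then `𝔳_θ` is an ideal of the (nilpotent) Lie algebra `𝔲_Θ`, and
`𝔲_Θ = ⟨x_θ⟩ ⊔ 𝔳_θ` is a corresponding semidirect decomposition. -/
theorem vtheta_ideal_of_utheta
    {K : Type*} [Field K] {L : Type*} [LieRing L] [LieAlgebra K L]
    {A : Type*} [AddCommMonoid A]
    (g : A → Submodule K L) (S : Set A) (θ : A) (hθS : θ ∈ S)
    (hbr : ∀ α β : A, ∀ x ∈ g α, ∀ y ∈ g β, ⁅x, y⁆ ∈ g (α + β))
    (hclosed : ∀ α ∈ S, ∀ β ∈ S, α + β ∈ S ∨ g (α + β) = ⊥)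
    (hnotθ : ∀ α ∈ S, ∀ β ∈ S, α + β ≠ θ)
    (habel : ∀ x ∈ g θ, ∀ y ∈ g θ, ⁅x, y⁆ = (0 : L))
    (H : Submodule K L) (hH : H ≤ g θ)
    (xθ : L) (hxθ : xθ ∈ g θ) (hxθH : xθ ∉ H)
    (hcompl : H ⊔ Submodule.span K {xθ} = g θ) :
    (∀ x ∈ (⨆ α ∈ S, g α), ∀ y ∈ (H ⊔ ⨆ α ∈ S \ {θ}, g α),
        ⁅x, y⁆ ∈ (H ⊔ ⨆ α ∈ S \ {θ}, g α)) ∧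
      (⨆ α ∈ S, g α) = Submodule.span K {xθ} ⊔ (H ⊔ ⨆ α ∈ S \ {θ}, g α) := by
  set W : Submodule K L := ⨆ α ∈ S \ {θ}, g α with hW
  set V : Submodule K L := H ⊔ W with hV
  -- key: brackets of root spaces for roots in S land in W
  have key : ∀ α ∈ S, ∀ β ∈ S, ∀ x ∈ g α, ∀ y ∈ g β, ⁅x, y⁆ ∈ W := by
    intro α hα β hβ x hx y hy
    rcases hclosed α hα β hβ with hs | hb
    · have : g (α + β) ≤ W := le_iSup₂ (f := fun γ (_ : γ ∈ S \ {θ}) => g γ)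
        (α + β) ⟨hs, hnotθ α hα β hβ⟩
      exact this (hbr α β x hx y hy)
    · have := hbr α β x hx y hy
      rw [hb] at this
      simp only [Submodule.mem_bot] at this
      rw [this]; exact zero_mem _
  constructor
  · -- ideal property
    have main : ∀ α ∈ S, ∀ x ∈ g α, ∀ y ∈ V, ⁅x, y⁆ ∈ V := by
      intro α hα x hx
      have : V ≤ V.comap (LieModule.toEnd K L L x) := by
        rw [hV]
        apply sup_le
        · intro y hy
          exact Submodule.mem_sup_right (key α hα θ hθS x hx y (hH hy))
        · apply iSup₂_le
          intro β hβ y hy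
          exact Submodule.mem_sup_right (key α hα β hβ.1 x hx y hy)
      intro y hy
      exact this hy
    intro x hx y hy
    rw [iSup_subtype'] at hx
    refine Submodule.iSup_induction (motive := fun z => ⁅z, y⁆ ∈ V) _ hx ?_ ?_ ?_
    · exact fun α z hz => main α α.2 z hz y hy
    · show ⁅(0:L), y⁆ ∈ V; rw [zero_lie]; exact zero_mem _
    · intro a b ha hb; show ⁅a + b, y⁆ ∈ V; rw [add_lie]; exact add_mem ha hb
  · -- semidirect decomposition
    apply le_antisymm
    · apply iSup₂_le
      intro α hα
      by_cases hαθ : α = θ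
      · subst hαθ
        rw [← hcompl]
        apply sup_le
        · exact le_trans le_sup_left le_sup_right
        · exact le_sup_left
      · refine le_trans ?_ (le_trans le_sup_right le_sup_right)
        exact le_iSup₂ (f := fun γ (_ : γ ∈ S \ {θ}) => g γ) α ⟨hα, hαθ⟩
    · apply sup_le
      · rw [Submodule.span_le]
        intro z hz
        simp only [Set.mem_singleton_iff] at hz
        subst hz
        exact (le_iSup₂ (f := fun γ (_ : γ ∈ S) => g γ) θ hθS) hxθ
      · apply sup_le
        · exact le_trans hH (le_iSup₂ (f := fun γ (_ : γ ∈ S) => g γ) θ hθS)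
        · apply iSup₂_le
          intro β hβ
          exact le_iSup₂ (f := fun γ (_ : γ ∈ S) => g γ) β hβ.1
end
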